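/- Let r ≥ 2 be an integer. A complex (r−1)×(r−1) matrix A satisfies C(p,q)·A = A·C(p, q+p) for all integers p, q if and only if A is a scalar multiple of the diagonal matrix T with diagonal entries T_{jj} = t^{j²−1}, j = 1, …, r−1. In particular, up to multiplication by a nonzero scalar, T is the unique invertible matrix with this property. -/

import Mathlib

open Complex Matrix

/-- `t = exp(iπ/(2r))`. -/
noncomputable def tconst (r : ℕ) : ℂ := Complex.exp (Real.pi * Complex.I / (2 * r))

/-- `ε(k,j) = 1` if `j ≡ k (mod 2r)`, `−1` if `j ≡ −k (mod 2r)`, `0` otherwise. -/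
def eps (r : ℕ) (k j : ℤ) : ℤ :=
  if (2 * (r : ℤ)) ∣ (j - k) then 1 else if (2 * (r : ℤ)) ∣ (j + k) then -1 else 0

/-- The matrix of the Weyl quantization of `2 cos 2π(px+qy)` in the basis `ζ_1, …, ζ_{r−1}`:
`C(p,q)_{k,m} = t^{−pq} (t^{2qm} ε(k, m−p) + t^{−2qm} ε(k, m+p))`, with indices shifted so that
the index `k : Fin (r-1)` corresponds to `k+1 ∈ {1, …, r−1}`. -/
noncomputable def Cmat (r : ℕ) (p q : ℤ) : Matrix (Fin (r - 1)) (Fin (r - 1)) ℂ :=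
  Matrix.of fun k m =>
    tconst r ^ (-(p * q)) *
      (tconst r ^ (2 * q * ((m : ℤ) + 1)) * (eps r ((k : ℤ) + 1) (((m : ℤ) + 1) - p) : ℂ) +
       tconst r ^ (-(2 * q * ((m : ℤ) + 1))) * (eps r ((k : ℤ) + 1) (((m : ℤ) + 1) + p) : ℂ))

/-- The quantized integer `[n] = sin(nπ/r)/sin(π/r)`. -/
noncomputable def qint (r : ℕ) (n : ℤ) : ℝ :=
  Real.sin (n * Real.pi / r) / Real.sin (Real.pi / r)

/-- The `T`-matrix: diagonal with entries `T_{jj} = t^{j²−1}`, `1 ≤ j ≤ r−1`. -/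
noncomputable def Tmat (r : ℕ) : Matrix (Fin (r - 1)) (Fin (r - 1)) ℂ :=
  Matrix.diagonal fun j => tconst r ^ (((j : ℤ) + 1) ^ 2 - 1)

/-!
`C(0,1)` is diagonal with the pairwise distinct eigenvalues `t^{2m} + t^{-2m} = 2 cos(mπ/r)`,
so any `A` commuting with it is diagonal. For diagonal `A`, the `(n, n+1)` entry of
`C(1,0) A = A C(1,1)` reads `a_{n+1} = t^{2n+1} a_n`, whose solutions are the multiples of
`T_{nn} = t^{n²-1}`. Conversely, `T` intertwines every pair because the two sides differ entrywise
by `t^{(m ∓ p)² - k²}`, and `4r ∣ (m ∓ p)² - k²` whenever `ε(k, m ∓ p) ≠ 0`, while `t` is a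
primitive `4r`-th root of unity.
-/

theorem Matrix.isDiag_of_diagonal_mul_eq_mul_diagonal {ι R : Type*} [Fintype ι] [DecidableEq ι]
    [CommRing R] [NoZeroDivisors R] {d : ι → R} (hd : Function.Injective d)
    {A : Matrix ι ι R} (h : diagonal d * A = A * diagonal d) : A.IsDiag := by
  intro i j hij
  have hij' : d i * A i j = A i j * d j := by
    simpa only [diagonal_mul, mul_diagonal] using congr_fun₂ h i j
  have : (d i - d j) * A i j = 0 := by linear_combination hij'
  exact (mul_eq_zero.mp this).resolve_left (sub_ne_zero.mpr (hd.ne hij))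

theorem eq_or_mul_eq_one_of_add_inv_eq_add_inv {K : Type*} [Field K] {x y : K}
    (hx : x ≠ 0) (hy : y ≠ 0) (h : x + x⁻¹ = y + y⁻¹) : x = y ∨ x * y = 1 := by
  have : (x - y) * (x * y - 1) = 0 := by
    field_simp at h
    linear_combination h
  rcases mul_eq_zero.mp this with h | h
  · exact .inl (sub_eq_zero.mp h)
  · exact .inr (sub_eq_zero.mp h)

theorem tconst_ne_zero (r : ℕ) : tconst r ≠ 0 := Complex.exp_ne_zero _

section tconst

variable {r : ℕ}

theorem isPrimitiveRoot_tconst (hr : r ≠ 0) : IsPrimitiveRoot (tconst r) (4 * r) := by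
  convert Complex.isPrimitiveRoot_exp (4 * r) (by omega) using 1
  rw [tconst]
  congr 1
  push_cast
  field_simp
  ring

theorem tconst_zpow_eq_zpow_iff (hr : r ≠ 0) {a b : ℤ} :
    tconst r ^ a = tconst r ^ b ↔ 4 * (r : ℤ) ∣ a - b := by
  rw [← div_eq_one_iff_eq (zpow_ne_zero _ (tconst_ne_zero r)), ← zpow_sub₀ (tconst_ne_zero r),
    (isPrimitiveRoot_tconst hr).zpow_eq_one_iff_dvd]
  push_cast
  rfl

end tconst

section eps

variable {r : ℕ}

theorem four_mul_dvd_sq_sub_sq_of_eps_ne_zero {k j : ℤ} (h : eps r k j ≠ 0) :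
    4 * (r : ℤ) ∣ j ^ 2 - k ^ 2 := by
  unfold eps at h
  split_ifs at h with hsub hadd
  · obtain ⟨s, hs⟩ := hsub
    exact ⟨s * (r * s + k), by linear_combination (j + k + 2 * (r : ℤ) * s) * hs⟩
  · obtain ⟨s, hs⟩ := hadd
    exact ⟨s * (r * s - k), by linear_combination (j - k + 2 * (r : ℤ) * s) * hs⟩
  · exact absurd rfl h

theorem eps_eq_ite {k j : ℤ} (hk : 0 < k) (hj : 0 < j) (hkj : k + j < 2 * r) :
    eps r k j = if j = k then 1 else 0 := by
  have hsub : 2 * (r : ℤ) ∣ j - k ↔ j = k := by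
    refine ⟨fun h => ?_, fun h => by simp [h]⟩
    have := Int.eq_zero_of_abs_lt_dvd h (abs_lt.mpr ⟨by omega, by omega⟩)
    omega
  have hadd : ¬ 2 * (r : ℤ) ∣ j + k := fun h => by
    have := Int.eq_zero_of_abs_lt_dvd h (abs_lt.mpr ⟨by omega, by omega⟩)
    omega
  by_cases hjk : j = k <;> simp [eps, hsub, hadd, hjk]

theorem zpow_mul_eps_eq (hr : r ≠ 0) {a b k j : ℤ} (h : a - b = j ^ 2 - k ^ 2) :
    tconst r ^ a * (eps r k j : ℂ) = tconst r ^ b * (eps r k j : ℂ) := by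
  by_cases he : eps r k j = 0
  · simp [he]
  · rw [(tconst_zpow_eq_zpow_iff hr).mpr (h ▸ four_mul_dvd_sq_sub_sq_of_eps_ne_zero he)]

end eps

section Cmat

variable {r : ℕ}

theorem Cmat_mul_Tmat (hr : r ≠ 0) (p q : ℤ) :
    Cmat r p q * Tmat r = Tmat r * Cmat r p (q + p) := by
  have ht := tconst_ne_zero r
  ext k m
  set K : ℤ := (k : ℤ) + 1
  set M : ℤ := (m : ℤ) + 1
  set t := tconst r
  calc (Cmat r p q * Tmat r) k m
      = t ^ (-(p * q) + 2 * q * M + (M ^ 2 - 1)) * (eps r K (M - p) : ℂ)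
        + t ^ (-(p * q) + -(2 * q * M) + (M ^ 2 - 1)) * (eps r K (M + p) : ℂ) := by
        simp only [Tmat, Cmat, mul_diagonal, of_apply, zpow_add₀ ht]
        ring
    _ = t ^ ((K ^ 2 - 1) + -(p * (q + p)) + 2 * (q + p) * M) * (eps r K (M - p) : ℂ)
        + t ^ ((K ^ 2 - 1) + -(p * (q + p)) + -(2 * (q + p) * M)) * (eps r K (M + p) : ℂ) := by
        rw [zpow_mul_eps_eq hr (j := M - p)
            (b := (K ^ 2 - 1) + -(p * (q + p)) + 2 * (q + p) * M) (by ring),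
          zpow_mul_eps_eq hr (j := M + p)
            (b := (K ^ 2 - 1) + -(p * (q + p)) + -(2 * (q + p) * M)) (by ring)]
    _ = (Tmat r * Cmat r p (q + p)) k m := by
        simp only [Tmat, Cmat, diagonal_mul, of_apply, zpow_add₀ ht]
        ring

theorem Cmat_zero (q : ℤ) :
    Cmat r 0 q = diagonal fun m : Fin (r - 1) =>
      tconst r ^ (2 * q * ((m : ℤ) + 1)) + tconst r ^ (-(2 * q * ((m : ℤ) + 1))) := by
  ext k m
  have hkm : ((m : ℤ) + 1 = (k : ℤ) + 1) ↔ k = m := by omega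
  rw [Cmat, of_apply, diagonal_apply, sub_zero, add_zero,
    eps_eq_ite (by omega) (by omega) (by omega)]
  by_cases h : k = m <;> simp [hkm, h]

theorem Cmat_one_apply_of_succ_eq (q : ℤ) {i j : Fin (r - 1)} (hij : (i : ℕ) + 1 = j) :
    Cmat r 1 q i j = tconst r ^ (q * (2 * (i : ℤ) + 3)) := by
  have hj : (j : ℤ) = i + 1 := by omega
  rw [Cmat, of_apply, hj, eps_eq_ite (by omega) (by omega) (by omega),
    eps_eq_ite (by omega) (by omega) (by omega)]
  simp only [show (i : ℤ) + 1 + 1 - 1 = i + 1 by ring, if_true,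
    show (i : ℤ) + 1 + 1 + 1 ≠ i + 1 by omega, if_false, Int.cast_one, Int.cast_zero, mul_one,
    mul_zero, add_zero, ← zpow_add₀ (tconst_ne_zero r)]
  ring_nf

theorem injective_tconst_zpow_add_inv :
    Function.Injective fun m : Fin (r - 1) =>
      tconst r ^ (2 * ((m : ℤ) + 1)) + (tconst r ^ (2 * ((m : ℤ) + 1)))⁻¹ := by
  intro m m' h
  have hr : r ≠ 0 := by have := m.isLt; omega
  have ht := tconst_ne_zero r
  rcases eq_or_mul_eq_one_of_add_inv_eq_add_inv (zpow_ne_zero _ ht) (zpow_ne_zero _ ht) h with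
    h | h
  · have hdvd := (tconst_zpow_eq_zpow_iff hr).mp h
    have := Int.eq_zero_of_abs_lt_dvd hdvd (abs_lt.mpr ⟨by omega, by omega⟩)
    exact Fin.ext (by omega)
  · rw [← zpow_add₀ ht, ← zpow_zero (tconst r), tconst_zpow_eq_zpow_iff hr] at h
    have := Int.eq_zero_of_abs_lt_dvd h (abs_lt.mpr ⟨by omega, by omega⟩)
    omega

theorem diagonal_eq_smul_Tmat (h0 : 0 < r - 1) {a : Fin (r - 1) → ℂ}
    (h : ∀ i j : Fin (r - 1), (i : ℕ) + 1 = j → a j = a i * tconst r ^ (2 * (i : ℤ) + 3)) :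
    diagonal a = a ⟨0, h0⟩ • Tmat r := by
  rw [Tmat, ← diagonal_smul]
  congr 1
  funext ⟨n, hn⟩
  induction n with
  | zero => simp
  | succ n ih =>
    rw [h ⟨n, by omega⟩ ⟨n + 1, hn⟩ rfl, ih (by omega), Pi.smul_apply, Pi.smul_apply, smul_eq_mul,
      smul_eq_mul, mul_assoc, ← zpow_add₀ (tconst_ne_zero r)]
    push_cast
    ring_nf

end Cmat

/-- A complex `(r−1)×(r−1)` matrix `A` satisfies `C(p,q)·A = A·C(p,q+p)` for all integers `p, q`
if and only if `A` is a scalar multiple of the diagonal matrix `T` with `T_{jj} = t^{j²−1}`. -/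
theorem weyl_T_matrix_unique (r : ℕ) (hr : 2 ≤ r)
    (A : Matrix (Fin (r - 1)) (Fin (r - 1)) ℂ) :
    (∀ p q : ℤ, Cmat r p q * A = A * Cmat r p (q + p)) ↔ ∃ c : ℂ, A = c • Tmat r := by
  constructor
  · intro h
    have hdiag : A.IsDiag := by
      refine isDiag_of_diagonal_mul_eq_mul_diagonal injective_tconst_zpow_add_inv ?_
      simpa [Cmat_zero, _root_.zpow_neg] using h 0 1
    rw [← hdiag.diagonal_diag] at h ⊢
    refine ⟨_, diagonal_eq_smul_Tmat (by omega) fun i j hij => ?_⟩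
    simpa [mul_diagonal, diagonal_mul, Cmat_one_apply_of_succ_eq _ hij] using
      congr_fun₂ (h 1 0) i j
  · rintro ⟨c, rfl⟩ p q
    rw [Matrix.mul_smul, Matrix.smul_mul, Cmat_mul_Tmat (by omega) p q]
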